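/- arXiv:1905.11762 — 5 statements merged into one kernel-verified Lean document; each statement's English description precedes it below -/
import Mathlib

section
/- For every replicated data type F and every history H, if H satisfies basic eventual consistency BEC(F), then H satisfies fluctuating eventual consistency FEC(F); that is, FEC(F) is at most as strong a consistency guarantee as BEC(F). -/
set_option autoImplicit false

/-- Consistency levels. -/
inductive Lvl : Type
  | weak
  | strong
  deriving DecidableEq

/-- A history `H = (E, op, rval, rb, ss, lvl)`.  The value `none` of `rval`
plays the role of the distinguished symbol `∇` (a pending operation). -/
structure History (E Op Val : Type) : Type where
  op : E → Op
  rval : E → Option Val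
  rb : E → E → Prop
  ss : E → E → Prop
  lvl : E → Lvl
  countable : Countable E
  rb_irrefl : ∀ a, ¬ rb a a
  rb_trans : ∀ a b c, rb a b → rb b c → rb a c
  rb_finite_preds : ∀ e, {e' | rb e' e}.Finite
  rb_ret : ∀ a b, rb a b → rval a ≠ none
  rb_interval : ∀ a b c d, rb a b → rb c d → rb a d ∨ rb c b
  ss_equiv : Equivalence ss
  ss_rb_total : ∀ a b, ss a b → a ≠ b → rb a b ∨ rb b a

/-- An abstract execution `A = (H, vis, ar, par)`. -/
structure AExec (E Op Val : Type) extends History E Op Val : Type where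
  vis : E → E → Prop
  ar : E → E → Prop
  par : E → E → E → Prop
  vis_acyclic : ∀ e, ¬ Relation.TransGen vis e e
  vis_finite_preds : ∀ e, {e' | vis e' e}.Finite
  ar_irrefl : ∀ a, ¬ ar a a
  ar_trans : ∀ a b c, ar a b → ar b c → ar a c
  ar_total : ∀ a b, a ≠ b → ar a b ∨ ar b a
  par_irrefl : ∀ e a, ¬ par e a a
  par_trans : ∀ e a b c, par e a b → par e b c → par e a c
  par_total : ∀ e a b, a ≠ b → par e a b ∨ par e b a

/-- An operation context `C = (E_C, op, vis, ar)`: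
a finite set of events with operations, visibility, and a strict total
arbitration order. -/
structure OpContext (Op : Type) : Type 1 where
  carrier : Type
  finite : Finite carrier
  op : carrier → Op
  vis : carrier → carrier → Prop
  ar : carrier → carrier → Prop
  ar_irrefl : ∀ a, ¬ ar a a
  ar_trans : ∀ a b c, ar a b → ar b c → ar a c
  ar_total : ∀ a b, a ≠ b → ar a b ∨ ar b a

namespace OpContext

variable {Op : Type}

/-- Isomorphism of operation contexts. -/
structure Iso (C C' : OpContext Op) where
  toEquiv : C.carrier ≃ C'.carrier
  map_op : ∀ x, C'.op (toEquiv x) = C.op x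
  map_vis : ∀ x y, C.vis x y ↔ C'.vis (toEquiv x) (toEquiv y)
  map_ar : ∀ x y, C.ar x y ↔ C'.ar (toEquiv x) (toEquiv y)

/-- The restriction of a context to a subset of its events. -/
def restrict (C : OpContext Op) (S : Set C.carrier) : OpContext Op where
  carrier := {x : C.carrier // x ∈ S}
  finite := by haveI := C.finite; exact Subtype.finite
  op := fun x => C.op x.1
  vis := fun x y => C.vis x.1 y.1
  ar := fun x y => C.ar x.1 y.1
  ar_irrefl := fun a => C.ar_irrefl a.1
  ar_trans := fun a b c hab hbc => C.ar_trans a.1 b.1 c.1 hab hbc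
  ar_total := fun a b h => C.ar_total a.1 b.1 (fun hh => h (Subtype.ext hh))

/-- The events of a context, listed in ascending arbitration order. -/
noncomputable def sortedEvents (C : OpContext Op) : List C.carrier := by
  haveI := C.finite
  letI : Fintype C.carrier := Fintype.ofFinite _
  letI le : C.carrier → C.carrier → Prop := fun a b => a = b ∨ C.ar a b
  haveI : DecidableRel le := Classical.decRel _
  haveI : IsTrans C.carrier le := ⟨by
    rintro a b c (rfl | hab) (rfl | hbc)
    · exact Or.inl rfl
    · exact Or.inr hbc
    · exact Or.inr hab
    · exact Or.inr (C.ar_trans _ _ _ hab hbc)⟩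
  haveI : IsAntisymm C.carrier le := ⟨by
    rintro a b (rfl | hab) (h | hba)
    · rfl
    · rfl
    · exact h.symm
    · exact absurd (C.ar_trans _ _ _ hab hba) (C.ar_irrefl a)⟩
  haveI : IsTotal C.carrier le := ⟨by
    intro a b
    by_cases h : a = b
    · exact Or.inl (Or.inl h)
    · rcases C.ar_total a b h with h' | h'
      · exact Or.inl (Or.inr h')
      · exact Or.inr (Or.inr h')⟩
  exact Finset.univ.sort le

end OpContext

/-- `rank B rel x` is the number of `y ∈ B` with `rel y x`. -/
noncomputable def rank {E : Type} (B : Set E) (r : E → E → Prop) (x : E) : ℕ :=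
  {y ∈ B | r y x}.ncard

namespace AExec

variable {E Op Val : Type}

/-- Session order `so := rb ∩ ss`. -/
def so (A : AExec E Op Val) (a b : E) : Prop := A.rb a b ∧ A.ss a b

/-- Happens-before `hb := (so ∪ vis)⁺`. -/
def hb (A : AExec E Op Val) : E → E → Prop :=
  Relation.TransGen (fun a b => A.so a b ∨ A.vis a b)

/-- The set `vis⁻¹(e)` of visibility predecessors of `e`. -/
def visPreds (A : AExec E Op Val) (e : E) : Set E := {x | A.vis x e}

/-- The operation context of an event: its visibility predecessors together
with the final arbitration order. -/
def context (A : AExec E Op Val) (e : E) : OpContext Op where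
  carrier := {x : E // A.vis x e}
  finite := (A.vis_finite_preds e).to_subtype
  op := fun x => A.op x.1
  vis := fun x y => A.vis x.1 y.1
  ar := fun x y => A.ar x.1 y.1
  ar_irrefl := fun a => A.ar_irrefl a.1
  ar_trans := fun a b c h1 h2 => A.ar_trans a.1 b.1 c.1 h1 h2
  ar_total := fun a b h => A.ar_total a.1 b.1 (fun hh => h (Subtype.ext hh))

/-- The fluctuating operation context of an event: its visibility predecessors
together with the arbitration order `par e` as perceived by `e`. -/
def fcontext (A : AExec E Op Val) (e : E) : OpContext Op where
  carrier := {x : E // A.vis x e}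
  finite := (A.vis_finite_preds e).to_subtype
  op := fun x => A.op x.1
  vis := fun x y => A.vis x.1 y.1
  ar := fun x y => A.par e x.1 y.1
  ar_irrefl := fun a => A.par_irrefl e a.1
  ar_trans := fun a b c h1 h2 => A.par_trans e a.1 b.1 c.1 h1 h2
  ar_total := fun a b h => A.par_total e a.1 b.1 (fun hh => h (Subtype.ext hh))

/-- Eventual visibility. -/
def EV (A : AExec E Op Val) : Prop :=
  ∀ e, {e' | A.rb e e' ∧ ¬ A.vis e e'}.Finite

/-- No circular causality: `hb` is acyclic. -/
def NCC (A : AExec E Op Val) : Prop := ∀ e, ¬ A.hb e e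

/-- Return value consistency. -/
def RVal (F : Op → OpContext Op → Val) (A : AExec E Op Val) : Prop :=
  ∀ e, A.rval e = some (F (A.op e) (A.context e))

/-- Fluctuating return value consistency. -/
def FRVal (F : Op → OpContext Op → Val) (A : AExec E Op Val) : Prop :=
  ∀ e, A.rval e = some (F (A.op e) (A.fcontext e))

/-- Convergent perceived arbitration. -/
def CPar (A : AExec E Op Val) : Prop :=
  ∀ e, {e' | A.vis e e' ∧
    rank (A.visPreds e') (A.par e') e ≠ rank (A.visPreds e') A.ar e}.Finite

/-- Basic eventual consistency. -/
def BEC (F : Op → OpContext Op → Val) (A : AExec E Op Val) : Prop :=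
  A.EV ∧ A.NCC ∧ A.RVal F

/-- Fluctuating eventual consistency. -/
def FEC (F : Op → OpContext Op → Val) (A : AExec E Op Val) : Prop :=
  A.EV ∧ A.NCC ∧ A.FRVal F ∧ A.CPar

/-- Single order (unparametrized): `vis = ar \ (E' × E)` for some set `E'`
of pending events. -/
def SinOrd (A : AExec E Op Val) : Prop :=
  ∃ E' : Set E, (∀ x ∈ E', A.rval x = none) ∧
    ∀ x y, A.vis x y ↔ (A.ar x y ∧ x ∉ E')

/-- Parametrized eventual visibility. -/
def EVL (A : AExec E Op Val) (l : Lvl) : Prop :=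
  ∀ e, {e' | A.lvl e' = l ∧ A.rb e e' ∧ ¬ A.vis e e'}.Finite

/-- Parametrized no circular causality: `hb ∩ (L × L)` is acyclic. -/
def NCCL (A : AExec E Op Val) (l : Lvl) : Prop :=
  ∀ e, ¬ Relation.TransGen (fun a b => A.hb a b ∧ A.lvl a = l ∧ A.lvl b = l) e e

/-- Parametrized return value consistency. -/
def RValL (F : Op → OpContext Op → Val) (A : AExec E Op Val) (l : Lvl) : Prop :=
  ∀ e, A.lvl e = l → A.rval e = some (F (A.op e) (A.context e))

/-- Parametrized fluctuating return value consistency. -/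
def FRValL (F : Op → OpContext Op → Val) (A : AExec E Op Val) (l : Lvl) : Prop :=
  ∀ e, A.lvl e = l → A.rval e = some (F (A.op e) (A.fcontext e))

/-- Parametrized convergent perceived arbitration. -/
def CParL (A : AExec E Op Val) (l : Lvl) : Prop :=
  ∀ e, {e' | A.lvl e' = l ∧ A.vis e e' ∧
    rank (A.visPreds e') (A.par e') e ≠ rank (A.visPreds e') A.ar e}.Finite

/-- Parametrized basic eventual consistency `BEC(l, F)`. -/
def BECL (F : Op → OpContext Op → Val) (A : AExec E Op Val) (l : Lvl) : Prop :=
  A.EVL l ∧ A.NCCL l ∧ A.RValL F l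

/-- Parametrized fluctuating eventual consistency `FEC(l, F)`. -/
def FECL (F : Op → OpContext Op → Val) (A : AExec E Op Val) (l : Lvl) : Prop :=
  A.EVL l ∧ A.NCCL l ∧ A.FRValL F l ∧ A.CParL l

/-- Parametrized single order `SinOrd(l)`:
`vis ∩ (E × L) = (ar ∩ (E × L)) \ (E' × E)` for some set `E'` of pending
events. -/
def SinOrdL (A : AExec E Op Val) (l : Lvl) : Prop :=
  ∃ E' : Set E, (∀ x ∈ E', A.rval x = none) ∧
    ∀ x y, A.lvl y = l → (A.vis x y ↔ (A.ar x y ∧ x ∉ E'))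

/-- Parametrized session arbitration `SessArb(l)`: `so ∩ (E × L) ⊆ ar`. -/
def SessArbL (A : AExec E Op Val) (l : Lvl) : Prop :=
  ∀ x y, A.so x y → A.lvl y = l → A.ar x y

/-- Parametrized real-time order `RT(l)`: `rb ∩ (L × L) ⊆ ar`. -/
def RTL (A : AExec E Op Val) (l : Lvl) : Prop :=
  ∀ x y, A.lvl x = l → A.lvl y = l → A.rb x y → A.ar x y

/-- Parametrized sequential consistency `Seq(l, F)`. -/
def SeqL (F : Op → OpContext Op → Val) (A : AExec E Op Val) (l : Lvl) : Prop :=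
  A.SinOrdL l ∧ A.SessArbL l ∧ A.BECL F l

/-- Parametrized linearizability `Lin(l, F)`. -/
def LinL (F : Op → OpContext Op → Val) (A : AExec E Op Val) (l : Lvl) : Prop :=
  A.SinOrdL l ∧ A.RTL l ∧ A.BECL F l

end AExec

/-- A history satisfies a consistency guarantee `P` iff it can be extended by
`vis`, `ar`, `par` to an abstract execution satisfying `P`. -/
def History.sat {E Op Val : Type} (H : History E Op Val)
    (P : AExec E Op Val → Prop) : Prop :=
  ∃ A : AExec E Op Val, A.toHistory = H ∧ P A

/-- A replicated data type: a return value for every operation and every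
operation context, invariant under isomorphism of contexts. -/
structure RDT (Op Val : Type) : Type 1 where
  F : Op → OpContext Op → Val
  iso_inv : ∀ (o : Op) (C C' : OpContext Op), Nonempty (C.Iso C') → F o C = F o C'

/-- An operation is read-only for `F` iff removing any event performing it
from any context does not change the value of any operation. -/
def isReadOnly {Op Val : Type} (F : Op → OpContext Op → Val) (o : Op) : Prop :=
  ∀ (o' : Op) (C : OpContext Op) (e : C.carrier), C.op e = o →
    F o' C = F o' (C.restrict {x | x ≠ e})

/-! ### The append-only sequence data type `F_seq` -/

/-- The 26-letter alphabet `{a, …, z}`. -/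
abbrev Letter : Type := Fin 26

/-- Words over the alphabet. -/
abbrev Word : Type := List Letter

/-- Operations of the append-only sequence data type. -/
inductive SeqOp : Type
  | append (s : Word)
  | read

/-- Return values of the append-only sequence data type. -/
inductive SeqVal : Type
  | ok
  | word (w : Word)

/-- The word returned by `read`: the concatenation, in ascending arbitration
order, of the words appended by the append events of the context. -/
noncomputable def seqReadWord (C : OpContext SeqOp) : Word :=
  (C.sortedEvents.map C.op).foldr
    (fun o w => match o with
      | SeqOp.append s => s ++ w
      | SeqOp.read => w) []

/-- The append-only sequence replicated data type `F_seq`. -/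
noncomputable def Fseq : SeqOp → OpContext SeqOp → SeqVal
  | SeqOp.append _, _ => SeqVal.ok
  | SeqOp.read, C => SeqVal.word (seqReadWord C)

/-! ### The non-negative counter data type `F_NNC` -/

/-- Operations of the non-negative counter. -/
inductive NNCOp : Type
  | add (v : ℕ)
  | subtract (v : ℕ)
  | get

/-- Return values of the non-negative counter. -/
inductive NNCVal : Type
  | ok
  | bool (b : Bool)
  | int (n : ℤ)

/-- One step of the fold computing the counter value. -/
def fNNC (x : ℤ) : NNCOp → ℤ
  | NNCOp.add v => x + v
  | NNCOp.subtract v => if (v : ℤ) ≤ x then x - v else x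
  | NNCOp.get => x

/-- The value of the counter in a context: fold `fNNC` starting from `0`
over the operations of the context taken in ascending arbitration order. -/
noncomputable def nncVal (C : OpContext NNCOp) : ℤ :=
  (C.sortedEvents.map C.op).foldl fNNC 0

/-- The non-negative counter replicated data type `F_NNC`. -/
noncomputable def Fnnc : NNCOp → OpContext NNCOp → NNCVal
  | NNCOp.add _, _ => NNCVal.ok
  | NNCOp.subtract v, C => NNCVal.bool (decide ((v : ℤ) ≤ nncVal C))
  | NNCOp.get, C => NNCVal.int (nncVal C)

/-!
Let every event perceive the final arbitration order, `par e := ar`. Then the fluctuating context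
of each event is its ordinary context, so `FRVal` becomes `RVal`, and `CPar` holds because the two
ranks it compares coincide everywhere.
-/

namespace AExec

variable {E Op Val : Type}

def withArPar (A : AExec E Op Val) : AExec E Op Val :=
  { A with
    par := fun _ => A.ar
    par_irrefl := fun _ => A.ar_irrefl
    par_trans := fun _ => A.ar_trans
    par_total := fun _ => A.ar_total }

variable (A : AExec E Op Val)

theorem fcontext_withArPar (e : E) : A.withArPar.fcontext e = A.context e := rfl

theorem frVal_withArPar_iff (F : Op → OpContext Op → Val) :
    A.withArPar.FRVal F ↔ A.RVal F := by
  simp only [FRVal, fcontext_withArPar]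
  rfl

theorem cPar_withArPar : A.withArPar.CPar :=
  fun _ => Set.finite_empty.subset fun _ h => h.2 rfl

theorem fec_withArPar_iff (F : Op → OpContext Op → Val) :
    A.withArPar.FEC F ↔ A.BEC F := by
  simp only [FEC, BEC, frVal_withArPar_iff, cPar_withArPar, and_true]
  rfl

end AExec

/-- For every replicated data type `F` and every history `H`,
if `H` satisfies `BEC(F)` then `H` satisfies `FEC(F)`:
`FEC(F)` is at most as strong as `BEC(F)`. -/
theorem fec_le_bec {E Op Val : Type} (F : RDT Op Val) (H : History E Op Val)
    (h : H.sat (AExec.BEC F.F)) : H.sat (AExec.FEC F.F) := by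
  obtain ⟨A, hA, hBEC⟩ := h
  exact ⟨A.withArPar, hA, (A.fec_withArPar_iff F.F).mpr hBEC⟩
end

section
/- There exists a history H over the operations of the append-only sequence data type F_seq that satisfies FEC(F_seq) but does not satisfy BEC(F_seq); hence FEC(F_seq) is strictly weaker than BEC(F_seq). -/
set_option autoImplicit false

/-! Two concurrent appends, of `a` and of `b`, are visible to two reads, one returning `ab` and
the other `ba`. A read of `F_seq` lists the visible appends in arbitration order, so under
`BEC` the single order `ar` would have to put `a` before `b` and `b` before `a`. Under `FEC` each
read sorts by its own perceived order `par`, and the second read may perceive the appends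
swapped; since the history is finite, `EV` and `CPar` hold trivially. -/

namespace OpContext

variable {Op : Type} (C : OpContext Op)

instance : Std.Irrefl C.ar := ⟨C.ar_irrefl⟩

instance : Std.Antisymm C.ar :=
  ⟨fun a b hab hba => absurd (C.ar_trans a b a hab hba) (C.ar_irrefl a)⟩

-- `sortedEvents` builds its order instances inline: the holes `(_)` let unification find them.
theorem mem_sortedEvents (x : C.carrier) : x ∈ C.sortedEvents := by
  unfold sortedEvents
  exact (@Finset.mem_sort _ _ _ (_) (_) (_) (_) _).mpr (@Finset.mem_univ _ (_) x)

theorem pairwise_sortedEvents : C.sortedEvents.Pairwise C.ar := by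
  have hle : C.sortedEvents.Pairwise (fun a b => a = b ∨ C.ar a b) := by
    unfold sortedEvents
    exact @Finset.pairwise_sort _ _ _ (_) (_) (_) (_)
  have hnodup : C.sortedEvents.Nodup := by
    unfold sortedEvents
    exact @Finset.sort_nodup _ _ _ (_) (_) (_) (_)
  exact (hle.and hnodup).imp fun ⟨hab, hne⟩ => hab.resolve_left hne

theorem sortedEvents_eq_of_pairwise {l : List C.carrier} (hl : l.Pairwise C.ar)
    (hmem : ∀ x, x ∈ l) : C.sortedEvents = l :=
  C.pairwise_sortedEvents.eq_of_mem_iff hl fun x => by simp [mem_sortedEvents, hmem]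

theorem pair_sublist_sortedEvents {p q : C.carrier} (h : C.ar p q) :
    [p, q].Sublist C.sortedEvents :=
  List.sublist_of_subperm_of_pairwise
    (List.subperm_of_subset (by simpa using ne_of_irrefl h) (by simp [mem_sortedEvents]))
    (by simpa using h) C.pairwise_sortedEvents

end OpContext

def SeqOp.appendedWord : SeqOp → Word
  | .append s => s
  | .read => []

theorem seqReadWord_eq_flatten (C : OpContext SeqOp) :
    seqReadWord C = (C.sortedEvents.map fun p => (C.op p).appendedWord).flatten := by
  rw [seqReadWord]
  induction C.sortedEvents with
  | nil => rfl
  | cons p l ih => cases h : C.op p <;> simp [h, ih, SeqOp.appendedWord]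

theorem mem_seqReadWord {C : OpContext SeqOp} {x : Letter} :
    x ∈ seqReadWord C ↔ ∃ p, x ∈ (C.op p).appendedWord := by
  simp [seqReadWord_eq_flatten, OpContext.mem_sortedEvents]

theorem append_sublist_seqReadWord {C : OpContext SeqOp} {p q : C.carrier} (h : C.ar p q) :
    ((C.op p).appendedWord ++ (C.op q).appendedWord).Sublist (seqReadWord C) := by
  rw [seqReadWord_eq_flatten]
  simpa using ((C.pair_sublist_sortedEvents h).map fun p => (C.op p).appendedWord).flatten

theorem seqReadWord_of_forall_eq_or_eq {C : OpContext SeqOp} {p q : C.carrier} (h : C.ar p q)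
    (hpq : ∀ x, x = p ∨ x = q) :
    seqReadWord C = (C.op p).appendedWord ++ (C.op q).appendedWord := by
  rw [seqReadWord_eq_flatten, C.sortedEvents_eq_of_pairwise (l := [p, q]) (by simpa using h)
    (by simpa using hpq)]
  simp

theorem OpContext.ar_of_seqReadWord_eq_pair {C : OpContext SeqOp} {p q : C.carrier}
    {x y : Letter} (hxy : x ≠ y) (hp : (C.op p).appendedWord = [x])
    (hq : (C.op q).appendedWord = [y]) (hread : seqReadWord C = [x, y]) : C.ar p q := by
  have hne : p ≠ q := by rintro rfl; exact hxy (by simpa [hp] using hq)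
  refine (C.ar_total p q hne).resolve_right fun hqp => hxy ?_
  have := append_sublist_seqReadWord hqp
  rw [hp, hq, hread] at this
  exact (List.cons_eq_cons.mp (this.eq_of_length rfl).symm).1

theorem AExec.ar_of_read_eq_pair {E : Type} {A : AExec E SeqOp SeqVal} (hA : A.RVal Fseq)
    {e i j : E} {x y : Letter} (hxy : x ≠ y) (hread : A.op e = .read)
    (hrval : A.rval e = some (.word [x, y])) (hi : A.op i = .append [x])
    (hj : A.op j = .append [y]) (hx : ∀ k, x ∈ (A.op k).appendedWord → k = i)
    (hy : ∀ k, y ∈ (A.op k).appendedWord → k = j) : A.ar i j := by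
  have hw : seqReadWord (A.context e) = [x, y] := by
    have := hA e
    rw [hrval, hread] at this
    simpa [Fseq] using this.symm
  obtain ⟨p, hp⟩ := mem_seqReadWord.mp (by simp [hw] : x ∈ seqReadWord (A.context e))
  obtain ⟨q, hq⟩ := mem_seqReadWord.mp (by simp [hw] : y ∈ seqReadWord (A.context e))
  obtain rfl : p.1 = i := hx _ hp
  obtain rfl : q.1 = j := hy _ hq
  exact OpContext.ar_of_seqReadWord_eq_pair (C := A.context e) (p := p) (q := q) hxy
    (by simp [AExec.context, hi, SeqOp.appendedWord])
    (by simp [AExec.context, hj, SeqOp.appendedWord]) hw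

theorem Relation.not_transGen_self_of_lt {α : Type} [Preorder α] {r : α → α → Prop}
    (h : ∀ a b, r a b → a < b) (a : α) : ¬ Relation.TransGen r a a := fun hr =>
  lt_irrefl a (Relation.transGen_minimal (r' := (· < ·)) h a a hr)

def History.concurrent {E Op Val : Type} [Countable E] (op : E → Op) (rval : E → Option Val) :
    History E Op Val where
  op := op
  rval := rval
  rb _ _ := False
  ss := Eq
  lvl _ := .weak
  countable := inferInstance
  rb_irrefl _ := id
  rb_trans _ _ _ h := h.elim
  rb_finite_preds _ := by simp
  rb_ret _ _ := False.elim
  rb_interval _ _ _ _ h := h.elim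
  ss_equiv := eq_equivalence
  ss_rb_total _ _ h hne := absurd h hne

namespace SwappedReads

def op : Fin 4 → SeqOp := ![.append [0], .append [1], .read, .read]

def rval : Fin 4 → Option SeqVal :=
  ![some .ok, some .ok, some (.word [0, 1]), some (.word [1, 0])]

def history : History (Fin 4) SeqOp SeqVal := .concurrent op rval

def perceive (e : Fin 4) : Equiv.Perm (Fin 4) := if e = 3 then Equiv.swap 0 1 else 1

def exec : AExec (Fin 4) SeqOp SeqVal where
  toHistory := history
  vis x y := x < 2 ∧ 2 ≤ y
  ar := (· < ·)
  par e a b := perceive e a < perceive e b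
  vis_acyclic := Relation.not_transGen_self_of_lt fun _ _ h => h.1.trans_le h.2
  vis_finite_preds _ := Set.toFinite _
  ar_irrefl := lt_irrefl
  ar_trans _ _ _ := lt_trans
  ar_total _ _ := Ne.lt_or_gt
  par_irrefl _ _ := lt_irrefl _
  par_trans _ _ _ _ := lt_trans
  par_total e _ _ h := ((perceive e).injective.ne h).lt_or_gt

theorem seqReadWord_fcontext {e : Fin 4} (he : 2 ≤ e) :
    seqReadWord (exec.fcontext e) = if e = 3 then [1, 0] else [0, 1] := by
  have hvis : ∀ x : Fin 4, x < 2 → exec.vis x e := fun x hx => ⟨hx, he⟩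
  let p : (exec.fcontext e).carrier := ⟨0, hvis 0 (by decide)⟩
  let q : (exec.fcontext e).carrier := ⟨1, hvis 1 (by decide)⟩
  have hpq : ∀ x, x = p ∨ x = q := by
    have hlt : ∀ x : Fin 4, x < 2 → x = 0 ∨ x = 1 := by decide
    rintro ⟨x, hx, -⟩
    rcases hlt x hx with rfl | rfl
    exacts [Or.inl rfl, Or.inr rfl]
  split_ifs with h3
  · subst h3
    exact seqReadWord_of_forall_eq_or_eq (p := q) (q := p)
      (show perceive 3 1 < perceive 3 0 by decide) fun x => (hpq x).symm
  · have hpar : (exec.fcontext e).ar p q := by simp [AExec.fcontext, exec, perceive, h3, p, q]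
    exact seqReadWord_of_forall_eq_or_eq hpar hpq

theorem fec : exec.FEC Fseq := by
  refine ⟨fun _ => Set.toFinite _, ?_, ?_, fun _ => Set.toFinite _⟩
  · exact Relation.not_transGen_self_of_lt fun a b h =>
      h.elim (fun h => h.1.elim) fun h => h.1.trans_le h.2
  · intro e
    fin_cases e
    · rfl
    · rfl
    · show rval 2 = some (.word (seqReadWord (exec.fcontext 2)))
      rw [seqReadWord_fcontext (by decide)]
      rfl
    · show rval 3 = some (.word (seqReadWord (exec.fcontext 3)))
      rw [seqReadWord_fcontext (by decide)]
      rfl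

theorem not_sat_bec : ¬ history.sat (AExec.BEC Fseq) := by
  rintro ⟨A, hA, -, -, hRVal⟩
  have hop : A.op = op := congrArg History.op hA
  have hrval : A.rval = rval := congrArg History.rval hA
  have hx : ∀ k, (0 : Letter) ∈ (A.op k).appendedWord → k = 0 := by rw [hop]; decide
  have hy : ∀ k, (1 : Letter) ∈ (A.op k).appendedWord → k = 1 := by rw [hop]; decide
  have h01 : A.ar 0 1 := A.ar_of_read_eq_pair hRVal (e := 2) (by decide)
    (by rw [hop]; rfl) (by rw [hrval]; rfl) (by rw [hop]; rfl) (by rw [hop]; rfl) hx hy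
  have h10 : A.ar 1 0 := A.ar_of_read_eq_pair hRVal (e := 3) (by decide)
    (by rw [hop]; rfl) (by rw [hrval]; rfl) (by rw [hop]; rfl) (by rw [hop]; rfl) hy hx
  exact A.ar_irrefl 0 (A.ar_trans 0 1 0 h01 h10)

end SwappedReads

/-- There is a history over the operations of the append-only
sequence data type `F_seq` that satisfies `FEC(F_seq)` but not `BEC(F_seq)`;
hence `FEC(F_seq)` is strictly weaker than `BEC(F_seq)`. -/
theorem fec_strictly_weaker_than_bec :
    ∃ (E : Type) (H : History E SeqOp SeqVal),
      H.sat (AExec.FEC Fseq) ∧ ¬ H.sat (AExec.BEC Fseq) :=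
  ⟨Fin 4, SwappedReads.history, ⟨SwappedReads.exec, rfl, SwappedReads.fec⟩,
    SwappedReads.not_sat_bec⟩
end

section
/- For every replicated data type F, every level l ∈ {weak, strong} and every history H, if H satisfies the parametrized guarantee BEC(l, F) then H satisfies the parametrized guarantee FEC(l, F). -/
set_option autoImplicit false

namespace AExec

variable {E Op Val : Type}

def withParAr (A : AExec E Op Val) : AExec E Op Val :=
  { A with
    par := fun _ => A.ar
    par_irrefl := fun _ => A.ar_irrefl
    par_trans := fun _ => A.ar_trans
    par_total := fun _ => A.ar_total }

theorem toHistory_withParAr (A : AExec E Op Val) : A.withParAr.toHistory = A.toHistory := rfl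

theorem fcontext_withParAr (A : AExec E Op Val) (e : E) :
    A.withParAr.fcontext e = A.context e := rfl

theorem cParL_withParAr (A : AExec E Op Val) (l : Lvl) : A.withParAr.CParL l := fun _ => by
  simp [withParAr]

theorem BECL.fecl_withParAr {F : Op → OpContext Op → Val} {A : AExec E Op Val} {l : Lvl}
    (h : A.BECL F l) : A.withParAr.FECL F l := by
  obtain ⟨hEV, hNCC, hRVal⟩ := h
  refine ⟨hEV, hNCC, fun e he => ?_, A.cParL_withParAr l⟩
  rw [fcontext_withParAr]
  exact hRVal e he

end AExec

/-- For every replicated data type `F`, every level `l` and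
every history `H`, if `H` satisfies `BEC(l, F)` then `H` satisfies
`FEC(l, F)`. -/
theorem fecl_le_becl {E Op Val : Type} (F : RDT Op Val) (l : Lvl)
    (H : History E Op Val) (h : H.sat (fun A => A.BECL F.F l)) :
    H.sat (fun A => A.FECL F.F l) := by
  obtain ⟨A, rfl, hA⟩ := h
  exact ⟨A.withParAr, A.toHistory_withParAr, hA.fecl_withParAr⟩
end

section
/- The parametrized guarantees Seq(l, F) and Lin(l, F) are incomparable, second direction: there exist a replicated data type F, a level l ∈ {weak, strong} and a history H such that H satisfies Lin(l, F) but does not satisfy Seq(l, F). -/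
set_option autoImplicit false

/-!
Take a data type whose operations report whether they see any event, and a session in which a
weak event returns before a strong one that reports seeing nothing. `RT(strong)` constrains only
pairs of strong events, so a linearizable execution may arbitrate the strong event first and make
nothing visible. Under `Seq(strong)`, session arbitration puts the weak event first instead, and
`SinOrd(strong)` then makes it, having returned, visible to the strong event, which contradicts the
strong event's return value.
-/

namespace AExec

variable {E Op Val : Type}

theorem hb_imp_rb_of_forall_not_vis {A : AExec E Op Val} (hvis : ∀ a b, ¬ A.vis a b) {a b : E}
    (h : A.hb a b) : A.rb a b := by
  induction h with
  | single hab => exact hab.resolve_right (hvis _ _) |>.1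
  | tail _ hbc ih => exact A.rb_trans _ _ _ ih (hbc.resolve_right (hvis _ _)).1

theorem ncc_of_forall_not_vis {A : AExec E Op Val} (hvis : ∀ a b, ¬ A.vis a b) : A.NCC :=
  fun e h => A.rb_irrefl e (hb_imp_rb_of_forall_not_vis hvis h)

theorem NCC.nccl {A : AExec E Op Val} (h : A.NCC) (l : Lvl) : A.NCCL l :=
  fun e he => h e (Relation.TransGen.lift' (p := fun a b => A.so a b ∨ A.vis a b) id
    (fun _ _ hab => hab.1) e e he)

theorem evl_of_finite [Finite E] (A : AExec E Op Val) (l : Lvl) : A.EVL l :=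
  fun _ => Set.toFinite _

theorem SeqL.vis_of_so {F : Op → OpContext Op → Val} {A : AExec E Op Val} {l : Lvl}
    (h : A.SeqL F l) {x y : E} (hxy : A.so x y) (hy : A.lvl y = l) : A.vis x y := by
  obtain ⟨⟨E', hE'_pending, hvis⟩, hsess, -⟩ := h
  exact (hvis x y hy).2 ⟨hsess x y hxy hy, fun hx => A.rb_ret x y hxy.1 (hE'_pending x hx)⟩

end AExec

open scoped Classical in
noncomputable def nonemptyRDT (Op : Type) : RDT Op Bool where
  F _ C := decide (Nonempty C.carrier)
  iso_inv _ _ _ := fun ⟨iso⟩ => by simp only [iso.toEquiv.nonempty_congr]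

theorem nonemptyRDT_F_eq_false_iff {Op : Type} (o : Op) (C : OpContext Op) :
    (nonemptyRDT Op).F o C = false ↔ IsEmpty C.carrier := by
  simp [nonemptyRDT]

def weakThenStrong : History Bool Unit Bool where
  op _ := ()
  rval _ := some false
  rb a b := a < b
  ss _ _ := True
  lvl e := cond e .strong .weak
  countable := inferInstance
  rb_irrefl := lt_irrefl
  rb_trans _ _ _ := lt_trans
  rb_finite_preds _ := Set.toFinite _
  rb_ret _ _ _ := Option.some_ne_none _
  rb_interval := by decide
  ss_equiv := ⟨fun _ => trivial, fun _ => trivial, fun _ _ => trivial⟩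
  ss_rb_total _ _ _ := lt_or_gt_of_ne

theorem weakThenStrong_lvl_eq_strong_iff {e : Bool} :
    weakThenStrong.lvl e = .strong ↔ e = true := by
  cases e <;> decide

def weakThenStrongLinExec : AExec Bool Unit Bool where
  toHistory := weakThenStrong
  vis _ _ := False
  ar a b := b < a
  par _ a b := b < a
  vis_acyclic _ h := by cases h <;> assumption
  vis_finite_preds _ := Set.toFinite _
  ar_irrefl := lt_irrefl
  ar_trans _ _ _ hab hbc := lt_trans hbc hab
  ar_total _ _ h := (lt_or_gt_of_ne h).symm
  par_irrefl _ := lt_irrefl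
  par_trans _ _ _ _ hab hbc := lt_trans hbc hab
  par_total _ _ _ h := (lt_or_gt_of_ne h).symm

theorem weakThenStrongLinExec_linL :
    weakThenStrongLinExec.LinL (nonemptyRDT Unit).F .strong := by
  have hstrong : ∀ {e}, weakThenStrongLinExec.lvl e = .strong → e = true :=
    weakThenStrong_lvl_eq_strong_iff.1
  refine ⟨⟨∅, fun _ => False.elim, fun x y hy => ?_⟩, fun x y hx hy hxy => ?_, ?_, ?_, ?_⟩
  · cases hstrong hy
    exact iff_of_false id fun h => (Bool.le_true x).not_gt h.1
  · cases hstrong hx; cases hstrong hy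
    exact absurd hxy (lt_irrefl _)
  · exact AExec.evl_of_finite _ _
  · exact (AExec.ncc_of_forall_not_vis fun _ _ => id).nccl _
  · intro e _
    exact congrArg some ((nonemptyRDT_F_eq_false_iff () (weakThenStrongLinExec.context e)).2
      ⟨fun x => x.2⟩).symm

theorem weakThenStrong_not_sat_seqL :
    ¬ weakThenStrong.sat fun A => A.SeqL (nonemptyRDT Unit).F .strong := by
  rintro ⟨A, hA, hseq⟩
  have hstrong : A.lvl true = .strong := by rw [hA]; rfl
  have hso : A.so false true := by rw [AExec.so, hA]; exact ⟨Bool.false_lt_true, trivial⟩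
  have hvis : A.vis false true := hseq.vis_of_so hso hstrong
  obtain ⟨-, -, -, -, hrvalL⟩ := hseq
  have hrval : A.rval true = some ((nonemptyRDT Unit).F () (A.context true)) :=
    hrvalL true hstrong
  rw [hA] at hrval
  exact ((nonemptyRDT_F_eq_false_iff _ _).1 (Option.some_injective _ hrval).symm).false
    (⟨false, hvis⟩ : (A.context true).carrier)

/-- `Seq(l, F)` and `Lin(l, F)` are incomparable, second
direction: some history satisfies `Lin(l, F)` but not `Seq(l, F)`. -/
theorem lin_not_implies_seq :
    ∃ (Op Val : Type) (F : RDT Op Val) (l : Lvl) (E : Type)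
      (H : History E Op Val),
      H.sat (fun A => A.LinL F.F l) ∧ ¬ H.sat (fun A => A.SeqL F.F l) :=
  ⟨Unit, Bool, nonemptyRDT Unit, .strong, Bool, weakThenStrong,
    ⟨weakThenStrongLinExec, rfl, weakThenStrongLinExec_linL⟩, weakThenStrong_not_sat_seqL⟩
end

section
/- The implication 'SinOrd and SessArb imply NCC' fails in parametrized form: there exist a level l ∈ {weak, strong} and an abstract execution A that satisfies SinOrd(l) and SessArb(l) but does not satisfy NCC(l). -/
set_option autoImplicit false

/-! A weak event `a` followed in its session by a strong event `b` that it sees gives the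
`hb`-cycle `a →so b →vis a` through the weak event. `SinOrd(weak)` only constrains visibility
into weak events and `SessArb(weak)` only session edges into weak events, so both hold once
`vis = ar` is the reverse of the session order and `a` comes first. -/

namespace AExec

variable {E Op Val : Type}

theorem sinOrdL_of_vis_iff_ar (A : AExec E Op Val) (h : ∀ x y, A.vis x y ↔ A.ar x y)
    (l : Lvl) : A.SinOrdL l :=
  ⟨∅, fun _ hx => hx.elim, fun x y _ => by simp [h]⟩

theorem not_nccL_of_so_of_vis (A : AExec E Op Val) {a b : E} (hso : A.so a b)
    (hvis : A.vis b a) : ¬ A.NCCL (A.lvl a) :=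
  fun h => h a (.single ⟨.tail (.single (.inl hso)) (.inr hvis), rfl, rfl⟩)

end AExec

theorem lt_or_lt_of_lt_of_lt {α : Type} [LinearOrder α] {a b c d : α} (hab : a < b)
    (hcd : c < d) : a < d ∨ c < b :=
  (lt_or_ge a d).imp_right fun hda => (hcd.trans_le hda).trans hab

def backwardVisExec (E : Type) [LinearOrder E] [Finite E] (lvl : E → Lvl) :
    AExec E Unit Unit where
  op _ := ()
  rval _ := some ()
  rb := (· < ·)
  ss _ _ := True
  lvl := lvl
  countable := inferInstance
  rb_irrefl := lt_irrefl
  rb_trans _ _ _ := lt_trans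
  rb_finite_preds _ := Set.toFinite _
  rb_ret _ _ _ := Option.some_ne_none _
  rb_interval _ _ _ _ := lt_or_lt_of_lt_of_lt
  ss_equiv := ⟨fun _ => trivial, fun _ => trivial, fun _ _ => trivial⟩
  ss_rb_total _ _ _ := lt_or_gt_of_ne
  vis := (· > ·)
  ar := (· > ·)
  par _ := (· > ·)
  vis_acyclic e h := lt_irrefl e (by rwa [Relation.transGen_eq_self] at h)
  vis_finite_preds _ := Set.toFinite _
  ar_irrefl := lt_irrefl
  ar_trans _ _ _ := gt_trans
  ar_total _ _ h := (lt_or_gt_of_ne h).symm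
  par_irrefl _ := lt_irrefl
  par_trans _ _ _ _ := gt_trans
  par_total _ _ _ h := (lt_or_gt_of_ne h).symm

namespace backwardVisExec

variable {E : Type} [LinearOrder E] [Finite E] (lvl : E → Lvl)

theorem sinOrdL (l : Lvl) : (backwardVisExec E lvl).SinOrdL l :=
  AExec.sinOrdL_of_vis_iff_ar _ (fun _ _ => Iff.rfl) l

theorem sessArbL {l : Lvl} (hl : ∀ y, lvl y = l → IsMin y) :
    (backwardVisExec E lvl).SessArbL l :=
  fun _ _ hxy hy => absurd hxy.1 (hl _ hy).not_lt

theorem not_nccL {a b : E} (hab : a < b) : ¬ (backwardVisExec E lvl).NCCL (lvl a) :=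
  AExec.not_nccL_of_so_of_vis _ ⟨hab, trivial⟩ hab

end backwardVisExec

/-- The implication "`SinOrd` and `SessArb` imply `NCC`"
fails in parametrized form: there are a level `l` and an abstract execution
satisfying `SinOrd(l)` and `SessArb(l)` but not `NCC(l)`. -/
theorem sinordl_sessarbl_not_imp_nccl :
    ∃ (E Op Val : Type) (l : Lvl) (A : AExec E Op Val),
      A.SinOrdL l ∧ A.SessArbL l ∧ ¬ A.NCCL l := by
  let lvl : Bool → Lvl := fun b => if b then .strong else .weak
  have hmin : ∀ y, lvl y = .weak → IsMin y := by
    rintro (_ | _) hy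
    · exact isMin_bot
    · cases hy
  exact ⟨Bool, Unit, Unit, .weak, backwardVisExec Bool lvl, backwardVisExec.sinOrdL lvl _,
    backwardVisExec.sessArbL lvl hmin, backwardVisExec.not_nccL lvl Bool.false_lt_true⟩
end
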